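/- arXiv:1804.03785 — 2 statements merged into one kernel-verified Lean document; each statement's English description precedes it below -/
import Mathlib

section
/- Dirichlet's divisor theorem: the sum over n ≤ x of d(n), where d is the number-of-divisors function, equals x·log x + (2γ − 1)·x + O(√x) as x → ∞, where γ is the Euler–Mascheroni constant. -/
open Filter Real Finset


lemma lemA (N : ℕ) : ∑ n ∈ Icc 1 N, (n.divisors.card) = ∑ a ∈ Icc 1 N, N / a := by
  have h1 : ∀ n ∈ Icc 1 N, n.divisors.card = ((Icc 1 N).filter (· ∣ n)).card := by
    intro n hn
    rw [mem_Icc] at hn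
    congr 1
    ext a
    simp only [Nat.mem_divisors, mem_filter, mem_Icc]
    constructor
    · rintro ⟨hd, hne⟩
      exact ⟨⟨Nat.one_le_iff_ne_zero.2 (fun h => by simp [h] at hd; omega),
        (Nat.le_of_dvd (by omega) hd).trans hn.2⟩, hd⟩
    · rintro ⟨⟨h1, h2⟩, hd⟩
      exact ⟨hd, by omega⟩
  rw [Finset.sum_congr rfl h1]
  simp_rw [Finset.card_filter]
  rw [Finset.sum_comm]
  refine Finset.sum_congr rfl fun a ha => ?_
  rw [← Finset.card_filter]
  exact Nat.Ioc_filter_dvd_card_eq_div N a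


lemma lemB (N : ℕ) (hN : 1 ≤ N) :
    ∑ a ∈ Icc 1 N, N / a + Nat.sqrt N * Nat.sqrt N = 2 * ∑ a ∈ Icc 1 (Nat.sqrt N), N / a := by
  set K := Nat.sqrt N with hK
  have hK1 : 1 ≤ K := Nat.sqrt_pos.2 hN
  have hKN : K ≤ N := Nat.sqrt_le_self N
  have hKsq : K * K ≤ N := by have := Nat.sqrt_le' N; nlinarith [this]
  have hNlt : N < (K + 1) * (K + 1) := by have := Nat.lt_succ_sqrt' N; nlinarith [this]
  -- split
  have hsplit : ∑ a ∈ Icc 1 N, N / a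
      = ∑ a ∈ Icc 1 K, N / a + ∑ a ∈ Ioc K N, N / a := by
    show ∑ a ∈ Ioc 0 N, N / a = ∑ a ∈ Ioc 0 K, N / a + ∑ a ∈ Ioc K N, N / a
    rw [← Finset.sum_Ioc_consecutive _ (Nat.zero_le K) hKN]
  -- swap
  have hswap : ∑ a ∈ Ioc K N, N / a = ∑ b ∈ Icc 1 K, (N / b - K) := by
    have hleft : ∀ a ∈ Ioc K N, N / a = ((Ioc 0 K).filter (fun b => a * b ≤ N)).card := by
      intro a ha
      rw [mem_Ioc] at ha
      have ha0 : 0 < a := lt_of_le_of_lt (Nat.zero_le K) ha.1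
      have hNa : N / a ≤ K := by
        rcases Nat.lt_or_ge (N / a) (K + 1) with h | h
        · omega
        · exfalso
          have : (K + 1) * a ≤ N := (Nat.le_div_iff_mul_le ha0).1 h
          have : (K + 1) * (K + 1) ≤ (K+1) * a := Nat.mul_le_mul_left _ (by omega)
          omega
      have : (Ioc 0 K).filter (fun b => a * b ≤ N) = Ioc 0 (N / a) := by
        ext b
        simp only [mem_filter, mem_Ioc]
        constructor
        · rintro ⟨⟨hb0, hbK⟩, hab⟩
          exact ⟨hb0, (Nat.le_div_iff_mul_le ha0).2 (by rwa [mul_comm])⟩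
        · rintro ⟨hb0, hb⟩
          exact ⟨⟨hb0, hb.trans hNa⟩, by rw [mul_comm]; exact (Nat.le_div_iff_mul_le ha0).1 hb⟩
      rw [this, Nat.card_Ioc, Nat.sub_zero]
    rw [Finset.sum_congr rfl hleft]
    simp_rw [Finset.card_filter]
    rw [Finset.sum_comm]
    refine Finset.sum_congr rfl fun b hb => ?_
    rw [mem_Icc] at hb
    have hb0 : 0 < b := hb.1
    have hKb : K ≤ N / b := by
      refine (Nat.le_div_iff_mul_le hb0).2 ?_
      calc K * b ≤ K * K := Nat.mul_le_mul_left _ hb.2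
      _ ≤ N := hKsq
    have hNbN : N / b ≤ N := Nat.div_le_self N b
    have : (Ioc K N).filter (fun a => a * b ≤ N) = Ioc K (N / b) := by
      ext a
      simp only [mem_filter, mem_Ioc]
      constructor
      · rintro ⟨⟨h1, h2⟩, hab⟩
        exact ⟨h1, (Nat.le_div_iff_mul_le hb0).2 hab⟩
      · rintro ⟨h1, h2⟩
        exact ⟨⟨h1, h2.trans hNbN⟩, (Nat.le_div_iff_mul_le hb0).1 h2⟩
    rw [← Finset.card_filter, this, Nat.card_Ioc]
  have hsub : ∑ b ∈ Icc 1 K, (N / b - K) + K * K = ∑ b ∈ Icc 1 K, N / b := by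
    have : ∑ b ∈ Icc 1 K, (N / b - K) + K * K
        = ∑ b ∈ Icc 1 K, ((N / b - K) + K) := by
      rw [Finset.sum_add_distrib, Finset.sum_const, Nat.card_Icc]
      simp [mul_comm]
    rw [this]
    refine Finset.sum_congr rfl fun b hb => ?_
    rw [mem_Icc] at hb
    have hKb : K ≤ N / b := by
      refine (Nat.le_div_iff_mul_le hb.1).2 ?_
      calc K * b ≤ K * K := Nat.mul_le_mul_left _ hb.2
      _ ≤ N := hKsq
    omega
  rw [hsplit, hswap]
  omega


-- Lemma D: harmonic asymptotic
lemma lemD (K : ℕ) (hK : 1 ≤ K) :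
    |((harmonic K : ℚ) : ℝ) - (Real.log K + Real.eulerMascheroniConstant)| ≤ 1 / K := by
  have hlo := Real.eulerMascheroniSeq_lt_eulerMascheroniConstant K
  have hhi := Real.eulerMascheroniConstant_lt_eulerMascheroniSeq' K
  rw [Real.eulerMascheroniSeq'] at hhi
  rw [Real.eulerMascheroniSeq] at hlo
  rw [if_neg (by omega : K ≠ 0)] at hhi
  have hK0 : (0:ℝ) < K := by exact_mod_cast hK
  have hlog : Real.log (K + 1) - Real.log K ≤ 1 / K := by
    rw [← Real.log_div (by positivity) (by positivity)]
    have := Real.log_le_sub_one_of_pos (show (0:ℝ) < (K+1)/K by positivity)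
    calc Real.log ((K+1)/K) ≤ (K+1)/K - 1 := this
    _ = 1 / K := by field_simp; ring
  rw [abs_le]
  constructor <;> nlinarith [hlo, hhi, hlog]

-- Lemma C: floor division vs real division
lemma lemC (N K : ℕ) :
    |(∑ a ∈ Icc 1 K, ((N / a : ℕ) : ℝ)) - N * ((harmonic K : ℚ) : ℝ)| ≤ K := by
  have hH : (N : ℝ) * ((harmonic K : ℚ) : ℝ) = ∑ a ∈ Icc 1 K, (N : ℝ) / a := by
    rw [harmonic_eq_sum_Icc]
    push_cast
    rw [Finset.mul_sum]
    refine Finset.sum_congr rfl fun a _ => ?_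
    rw [div_eq_mul_inv]
  rw [hH, ← Finset.sum_sub_distrib]
  calc |∑ a ∈ Icc 1 K, (((N / a : ℕ) : ℝ) - (N : ℝ) / a)|
      ≤ ∑ a ∈ Icc 1 K, |(((N / a : ℕ) : ℝ) - (N : ℝ) / a)| := Finset.abs_sum_le_sum_abs _ _
    _ ≤ ∑ a ∈ Icc 1 K, 1 := by
        refine Finset.sum_le_sum fun a ha => ?_
        rw [mem_Icc] at ha
        have ha0 : (0:ℝ) < a := by exact_mod_cast ha.1
        have h1 : ((N / a : ℕ) : ℝ) ≤ (N : ℝ) / a := Nat.cast_div_le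
        have h2 : (N : ℝ) / a < ((N / a : ℕ) : ℝ) + 1 := by
          rw [div_lt_iff₀ ha0]
          have : N < (N / a + 1) * a := by
            have := Nat.div_add_mod N a
            have := Nat.mod_lt N (show 0 < a from ha.1)
            nlinarith
          exact_mod_cast this
        rw [abs_le]
        constructor <;> nlinarith
    _ = K := by rw [Finset.sum_const, Nat.card_Icc]; simp

set_option maxHeartbeats 1000000 in
lemma lemE (N : ℕ) (hN : 2 ≤ N) :
    |(∑ n ∈ Icc 1 N, ((n.divisors.card : ℕ) : ℝ)) -
      ((N : ℝ) * Real.log N + (2 * Real.eulerMascheroniConstant - 1) * N)| ≤ 16 * Real.sqrt N := by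
  obtain ⟨K, hKdef⟩ : ∃ K, Nat.sqrt N = K := ⟨_, rfl⟩
  have hK1 : 1 ≤ K := hKdef ▸ Nat.sqrt_pos.2 (by omega)
  have hKsq : K * K ≤ N := by have := Nat.sqrt_le' N; rw [hKdef] at this; nlinarith [this]
  have hNlt : N < (K + 1) * (K + 1) := by
    have := Nat.lt_succ_sqrt' N; rw [hKdef] at this; nlinarith [this]
  have hrK1 : (1:ℝ) ≤ (K:ℝ) := by exact_mod_cast hK1
  have hrK0 : (0:ℝ) < (K:ℝ) := by linarith
  have hN0 : (0:ℝ) < (N:ℝ) := by positivity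
  have hrKsq : (K:ℝ) * K ≤ (N:ℝ) := by exact_mod_cast hKsq
  have hrNlt : (N:ℝ) ≤ (K:ℝ) * K + 2 * K := by
    have : N ≤ K * K + 2 * K := by nlinarith [hNlt]
    exact_mod_cast this
  set γ := Real.eulerMascheroniConstant with hγ
  set S : ℝ := ∑ n ∈ Icc 1 N, ((n.divisors.card : ℕ) : ℝ) with hS
  set T : ℝ := ∑ a ∈ Icc 1 K, ((N / a : ℕ) : ℝ) with hT
  set H : ℝ := ((harmonic K : ℚ) : ℝ) with hH
  -- combinatorial identity, cast to ℝ
  have hId : S + (K:ℝ) * K = 2 * T := by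
    have h2 : (∑ n ∈ Icc 1 N, n.divisors.card) + K * K = 2 * ∑ a ∈ Icc 1 K, N / a := by
      rw [lemA]
      rw [← hKdef]
      exact lemB N (by omega)
    have h3 := congrArg (fun m : ℕ => (m : ℝ)) h2
    push_cast at h3
    rw [hS, hT]
    exact h3
  -- analytic bounds
  have e1 : |T - N * H| ≤ (K:ℝ) := lemC N K
  have e2 : |2 * (N:ℝ) * (H - (Real.log K + γ))| ≤ 2 * N / K := by
    rw [abs_mul, abs_of_nonneg (by positivity : (0:ℝ) ≤ 2 * (N:ℝ))]
    calc 2 * (N:ℝ) * |H - (Real.log K + γ)| ≤ 2 * (N:ℝ) * (1 / K) := by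
          exact mul_le_mul_of_nonneg_left (lemD K hK1) (by positivity)
      _ = 2 * N / K := by ring
  have hlogs : 0 ≤ Real.log N - 2 * Real.log K ∧ Real.log N - 2 * Real.log K ≤ 2 / K := by
    have hKK : Real.log ((K:ℝ) * K) = 2 * Real.log K := by
      rw [Real.log_mul (by positivity) (by positivity)]; ring
    constructor
    · rw [← hKK, sub_nonneg]
      exact Real.log_le_log (by positivity) hrKsq
    · rw [← hKK]
      have h1 : Real.log ((N:ℝ)) - Real.log ((K:ℝ)*K) = Real.log ((N:ℝ) / ((K:ℝ)*K)) := by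
        rw [Real.log_div (by positivity) (by positivity)]
      rw [h1]
      have h2 := Real.log_le_sub_one_of_pos (show (0:ℝ) < (N:ℝ)/((K:ℝ)*K) by positivity)
      have h3 : (N:ℝ) / ((K:ℝ)*K) - 1 ≤ 2 / K := by
        rw [div_sub_one (by positivity), div_le_div_iff₀ (by positivity) hrK0]
        nlinarith
      linarith
  have e3 : |(N:ℝ) * (2 * Real.log K - Real.log N)| ≤ 2 * N / K := by
    rw [abs_mul, abs_of_nonneg hN0.le, abs_of_nonpos (by linarith [hlogs.1])]
    have : -(2 * Real.log (K:ℝ) - Real.log N) ≤ 2 / K := by linarith [hlogs.2]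
    calc (N:ℝ) * -(2 * Real.log (K:ℝ) - Real.log N) ≤ (N:ℝ) * (2 / K) :=
          mul_le_mul_of_nonneg_left this hN0.le
      _ = 2 * N / K := by ring
  have e4 : |(N:ℝ) - (K:ℝ) * K| ≤ 2 * K := by
    rw [abs_of_nonneg (by linarith)]
    linarith
  have hNK : (N:ℝ) / K ≤ 3 * K := by
    rw [div_le_iff₀ hrK0]
    nlinarith
  have hsqrt : (K:ℝ) ≤ Real.sqrt N := (Real.le_sqrt' hrK0).2 (by nlinarith)
  -- combine
  have key : S - ((N:ℝ) * Real.log N + (2 * γ - 1) * N)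
      = 2 * (T - N * H) + (2 * (N:ℝ) * (H - (Real.log K + γ))
        + ((N:ℝ) * (2 * Real.log K - Real.log N) + ((N:ℝ) - (K:ℝ) * K))) := by
    have : S = 2 * T - (K:ℝ) * K := by linarith [hId]
    rw [this]; ring
  rw [key]
  calc |2 * (T - N * H) + (2 * (N:ℝ) * (H - (Real.log K + γ))
        + ((N:ℝ) * (2 * Real.log K - Real.log N) + ((N:ℝ) - (K:ℝ) * K)))|
      ≤ |2 * (T - N * H)| + (|2 * (N:ℝ) * (H - (Real.log K + γ))|
        + (|(N:ℝ) * (2 * Real.log K - Real.log N)| + |(N:ℝ) - (K:ℝ) * K|)) := by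
        refine (abs_add_le _ _).trans ?_
        gcongr
        refine (abs_add_le _ _).trans ?_
        gcongr
        exact abs_add_le _ _
    _ ≤ 2 * (K:ℝ) + (2 * N / K + (2 * N / K + 2 * K)) := by
        have h0 : |2 * (T - N * H)| ≤ 2 * (K:ℝ) := by
          rw [abs_mul, abs_of_nonneg (by norm_num : (0:ℝ) ≤ 2)]
          linarith [e1]
        exact add_le_add h0 (add_le_add e2 (add_le_add e3 e4))
    _ ≤ 16 * (K:ℝ) := by
        have h2NK : 2 * (N:ℝ) / K ≤ 6 * K := by
          rw [div_le_iff₀ hrK0]; nlinarith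
        linarith
    _ ≤ 16 * Real.sqrt N := by linarith

theorem dirichlet_divisor :
    (fun x : ℝ => (∑ n ∈ Finset.Icc 1 ⌊x⌋₊, ((n : ℕ).divisors.card : ℝ)) -
      (x * Real.log x + (2 * Real.eulerMascheroniConstant - 1) * x))
      =O[atTop] (fun x : ℝ => Real.sqrt x) := by
  rw [Asymptotics.isBigO_iff]
  refine ⟨18, ?_⟩
  filter_upwards [Filter.eventually_ge_atTop (2:ℝ)] with x hx
  have hx0 : (0:ℝ) < x := by linarith
  obtain ⟨N, hNdef⟩ : ∃ N, ⌊x⌋₊ = N := ⟨_, rfl⟩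
  have hN2 : 2 ≤ N := by
    rw [← hNdef]
    exact Nat.le_floor (by exact_mod_cast hx)
  have hNx : (N:ℝ) ≤ x := by rw [← hNdef]; exact Nat.floor_le hx0.le
  have hxN : x < (N:ℝ) + 1 := by rw [← hNdef]; exact_mod_cast Nat.lt_floor_add_one x
  have hN0 : (0:ℝ) < (N:ℝ) := by positivity
  have hE := lemE N hN2
  set γ := Real.eulerMascheroniConstant with hγ
  have hlx0 : 0 ≤ Real.log x := Real.log_nonneg (by linarith)
  have hlogdiff : 0 ≤ x * Real.log x - (N:ℝ) * Real.log N ∧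
      x * Real.log x - (N:ℝ) * Real.log N ≤ Real.log x + 1 := by
    have hlogm : Real.log N ≤ Real.log x := Real.log_le_log hN0 hNx
    have hN2r : (2:ℝ) ≤ (N:ℝ) := by exact_mod_cast hN2
    have hlN0 : 0 ≤ Real.log (N:ℝ) := Real.log_nonneg (by linarith)
    have h2 : Real.log x - Real.log N ≤ x / N - 1 := by
      have := Real.log_le_sub_one_of_pos (show (0:ℝ) < x / N by positivity)
      rwa [Real.log_div (by positivity) (by positivity)] at this
    have h3 : (N:ℝ) * (Real.log x - Real.log N) ≤ x - N := by
      calc (N:ℝ) * (Real.log x - Real.log N) ≤ (N:ℝ) * (x / N - 1) :=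
            mul_le_mul_of_nonneg_left h2 hN0.le
        _ = x - N := by field_simp
    constructor
    · nlinarith
    · nlinarith
  have hγb : 0 ≤ 2 * γ - 1 ∧ 2 * γ - 1 ≤ 1 := by
    have h1 := Real.one_half_lt_eulerMascheroniConstant
    have h2 := Real.eulerMascheroniConstant_lt_two_thirds
    constructor <;> [linarith; linarith]
  have hsqmono : Real.sqrt (N:ℝ) ≤ Real.sqrt x := Real.sqrt_le_sqrt hNx
  have hlog2 : Real.log x + 2 ≤ 2 * Real.sqrt x := by
    have hs0 : 0 < Real.sqrt x := Real.sqrt_pos.2 hx0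
    have h1 : Real.log (Real.sqrt x) ≤ Real.sqrt x - 1 := Real.log_le_sub_one_of_pos hs0
    have h2 : Real.log x = 2 * Real.log (Real.sqrt x) := by
      rw [Real.log_sqrt hx0.le]; ring
    linarith
  have hsx0 : 0 ≤ Real.sqrt x := Real.sqrt_nonneg x
  rw [Real.norm_eq_abs, Real.norm_eq_abs, abs_of_nonneg hsx0, hNdef]
  have htri : |(∑ n ∈ Finset.Icc 1 N, ((n.divisors.card : ℕ) : ℝ)) -
      (x * Real.log x + (2 * γ - 1) * x)|
      ≤ |(∑ n ∈ Finset.Icc 1 N, ((n.divisors.card : ℕ) : ℝ)) -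
        ((N:ℝ) * Real.log N + (2 * γ - 1) * N)|
        + |x * Real.log x - (N:ℝ) * Real.log N| + |(2 * γ - 1) * (x - N)| := by
    have heq : (∑ n ∈ Finset.Icc 1 N, ((n.divisors.card : ℕ) : ℝ)) -
        (x * Real.log x + (2 * γ - 1) * x)
        = ((∑ n ∈ Finset.Icc 1 N, ((n.divisors.card : ℕ) : ℝ)) -
          ((N:ℝ) * Real.log N + (2 * γ - 1) * N))
          + (-(x * Real.log x - (N:ℝ) * Real.log N)) + (-((2 * γ - 1) * (x - N))) := by ring
    rw [heq]
    refine (abs_add_three _ _ _).trans ?_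
    rw [abs_neg, abs_neg]
  have hb2 : |x * Real.log x - (N:ℝ) * Real.log N| ≤ Real.log x + 1 := by
    rw [abs_of_nonneg hlogdiff.1]; exact hlogdiff.2
  have hb3 : |(2 * γ - 1) * (x - N)| ≤ 1 := by
    rw [abs_mul, abs_of_nonneg hγb.1, abs_of_nonneg (by linarith : (0:ℝ) ≤ x - N)]
    nlinarith [hγb.1, hγb.2]
  calc |(∑ n ∈ Finset.Icc 1 N, ((n.divisors.card : ℕ) : ℝ)) -
      (x * Real.log x + (2 * γ - 1) * x)|
      ≤ 16 * Real.sqrt N + (Real.log x + 1) + 1 := by linarith [htri, hE, hb2, hb3]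
    _ ≤ 16 * Real.sqrt x + 2 * Real.sqrt x := by linarith
    _ = 18 * Real.sqrt x := by ring
end

section
/- Srinivasan's optimization lemma (general case): Let N, P be positive integers, u_n ≥ 0, v_p > 0, A_n ≥ 0, B_p ≥ 0 for 1 ≤ n ≤ N, 1 ≤ p ≤ P, and 0 < Q₁ ≤ Q₂. Then there exists q with Q₁ ≤ q ≤ Q₂ such that ∑_{n=1}^N A_n q^{u_n} + ∑_{p=1}^P B_p q^{−v_p} ≤ (N+P)·(∑_{n=1}^N ∑_{p=1}^P (A_n^{v_p} B_p^{u_n})^{1/(u_n+v_p)} + ∑_{n=1}^N A_n Q₁^{u_n} + ∑_{p=1}^P B_p Q₂^{−v_p}). -/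
open Finset

/-- If at `q > 0` an increasing term equals a decreasing term, their common value
is the cross term. -/
lemma cross_value (a b uu vv q : ℝ) (ha : 0 ≤ a) (hb : 0 ≤ b) (huu : 0 ≤ uu)
    (hvv : 0 < vv) (hq : 0 < q) (heq : a * q ^ uu = b * q ^ (-vv)) :
    a * q ^ uu = (a ^ vv * b ^ uu) ^ (1 / (uu + vv)) := by
  have huv : 0 < uu + vv := by linarith
  rcases ha.eq_or_lt with ha0 | ha0
  · rw [← ha0, zero_mul, Real.zero_rpow hvv.ne', zero_mul,
      Real.zero_rpow (one_div_ne_zero huv.ne')]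
  · set m := a * q ^ uu with hm
    have hqu : (0:ℝ) < q ^ uu := Real.rpow_pos_of_pos hq _
    have hmpos : 0 < m := mul_pos ha0 hqu
    have hb0 : 0 < b := by
      by_contra hb0
      push_neg at hb0
      have : b = 0 := le_antisymm hb0 hb
      rw [this, zero_mul] at heq
      exact absurd heq hmpos.ne'
    have key : m ^ (uu + vv) = a ^ vv * b ^ uu := by
      have h1 : m ^ vv = a ^ vv * q ^ (uu * vv) := by
        rw [hm, Real.mul_rpow ha hqu.le, ← Real.rpow_mul hq.le]
      have h2 : m ^ uu = b ^ uu * q ^ (-vv * uu) := by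
        rw [heq, Real.mul_rpow hb (Real.rpow_pos_of_pos hq _).le,
          ← Real.rpow_mul hq.le]
      rw [Real.rpow_add hmpos, h2, h1]
      rw [show b ^ uu * q ^ (-vv * uu) * (a ^ vv * q ^ (uu * vv)) =
        a ^ vv * b ^ uu * (q ^ (-vv * uu) * q ^ (uu * vv)) by ring,
        ← Real.rpow_add hq]
      rw [show -vv * uu + uu * vv = 0 by ring, Real.rpow_zero, mul_one]
    rw [← key, ← Real.rpow_mul hmpos.le, mul_one_div, div_self huv.ne',
      Real.rpow_one]

theorem srinivasan_general (N P : ℕ) (hN : 0 < N) (hP : 0 < P)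
    (u A : Fin N → ℝ) (v B : Fin P → ℝ)
    (hu : ∀ n, 0 ≤ u n) (hv : ∀ p, 0 < v p)
    (hA : ∀ n, 0 ≤ A n) (hB : ∀ p, 0 ≤ B p)
    (Q₁ Q₂ : ℝ) (hQ₁ : 0 < Q₁) (hQ : Q₁ ≤ Q₂) :
    ∃ q : ℝ, Q₁ ≤ q ∧ q ≤ Q₂ ∧
      ∑ n, A n * q ^ u n + ∑ p, B p * q ^ (-(v p)) ≤
        (N + P) * (∑ n, ∑ p, (A n ^ v p * B p ^ u n) ^ (1 / (u n + v p)) +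
          ∑ n, A n * Q₁ ^ u n + ∑ p, B p * Q₂ ^ (-(v p))) := by
  haveI : NeZero N := ⟨hN.ne'⟩
  haveI : NeZero P := ⟨hP.ne'⟩
  have hneN : (univ : Finset (Fin N)).Nonempty := univ_nonempty
  have hneP : (univ : Finset (Fin P)).Nonempty := univ_nonempty
  set G : ℝ → ℝ := fun q => univ.sup' hneN (fun n => A n * q ^ u n) with hG
  set H : ℝ → ℝ := fun q => univ.sup' hneP (fun p => B p * q ^ (-(v p))) with hH
  have hGle : ∀ q n, A n * q ^ u n ≤ G q := fun q n =>
    Finset.le_sup' (fun n => A n * q ^ u n) (mem_univ n)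
  have hHle : ∀ q p, B p * q ^ (-(v p)) ≤ H q := fun q p =>
    Finset.le_sup' (fun p => B p * q ^ (-(v p))) (mem_univ p)
  -- Nonnegativity of the bracket
  have hcross : 0 ≤ ∑ n, ∑ p, (A n ^ v p * B p ^ u n) ^ (1 / (u n + v p)) := by
    apply Finset.sum_nonneg; intro n _; apply Finset.sum_nonneg; intro p _
    apply Real.rpow_nonneg
    exact mul_nonneg (Real.rpow_nonneg (hA n) _) (Real.rpow_nonneg (hB p) _)
  have hA1 : 0 ≤ ∑ n, A n * Q₁ ^ u n := by
    apply Finset.sum_nonneg; intro n _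
    exact mul_nonneg (hA n) (Real.rpow_pos_of_pos hQ₁ _).le
  have hB2 : 0 ≤ ∑ p, B p * Q₂ ^ (-(v p)) := by
    apply Finset.sum_nonneg; intro p _
    exact mul_nonneg (hB p) (Real.rpow_pos_of_pos (lt_of_lt_of_le hQ₁ hQ) _).le
  -- sums bounded by card times sup'
  have hsumG : ∀ q : ℝ, ∑ n, A n * q ^ u n ≤ N * G q := by
    intro q
    have := Finset.sum_le_card_nsmul univ (fun n => A n * q ^ u n) (G q)
      (fun n _ => hGle q n)
    simpa [nsmul_eq_mul] using this
  have hsumH : ∀ q : ℝ, ∑ p, B p * q ^ (-(v p)) ≤ P * H q := by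
    intro q
    have := Finset.sum_le_card_nsmul univ (fun p => B p * q ^ (-(v p))) (H q)
      (fun p _ => hHle q p)
    simpa [nsmul_eq_mul] using this
  have hNP : (0:ℝ) ≤ (N:ℝ) + P := by positivity
  -- main bound: if q ∈ [Q₁,Q₂] and max(G q, H q) ≤ bracket, done
  have main : ∀ q : ℝ, Q₁ ≤ q → q ≤ Q₂ →
      max (G q) (H q) ≤ (∑ n, ∑ p, (A n ^ v p * B p ^ u n) ^ (1 / (u n + v p)) +
          ∑ n, A n * Q₁ ^ u n + ∑ p, B p * Q₂ ^ (-(v p))) →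
      ∃ q : ℝ, Q₁ ≤ q ∧ q ≤ Q₂ ∧
      ∑ n, A n * q ^ u n + ∑ p, B p * q ^ (-(v p)) ≤
        (N + P) * (∑ n, ∑ p, (A n ^ v p * B p ^ u n) ^ (1 / (u n + v p)) +
          ∑ n, A n * Q₁ ^ u n + ∑ p, B p * Q₂ ^ (-(v p))) := by
    intro q h1 h2 hmax
    refine ⟨q, h1, h2, ?_⟩
    have e1 := hsumG q
    have e2 := hsumH q
    have hGm : G q ≤ max (G q) (H q) := le_max_left _ _
    have hHm : H q ≤ max (G q) (H q) := le_max_right _ _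
    set R := ∑ n, ∑ p, (A n ^ v p * B p ^ u n) ^ (1 / (u n + v p)) +
          ∑ n, A n * Q₁ ^ u n + ∑ p, B p * Q₂ ^ (-(v p)) with hR
    calc ∑ n, A n * q ^ u n + ∑ p, B p * q ^ (-(v p))
        ≤ N * G q + P * H q := by linarith
      _ ≤ N * R + P * R := by
          gcongr <;> [exact le_trans hGm hmax; exact le_trans hHm hmax]
      _ = (N + P) * R := by ring
  -- Case analysis
  by_cases hc1 : H Q₁ ≤ G Q₁
  · -- take q = Q₁
    apply main Q₁ le_rfl hQ
    obtain ⟨n, _, hn⟩ := Finset.exists_mem_eq_sup' hneN (fun n => A n * Q₁ ^ u n)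
    have hle : G Q₁ ≤ ∑ n, A n * Q₁ ^ u n := by
      have : G Q₁ = A n * Q₁ ^ u n := hn
      rw [this]
      exact Finset.single_le_sum (f := fun n => A n * Q₁ ^ u n)
        (fun i _ => mul_nonneg (hA i) (Real.rpow_pos_of_pos hQ₁ _).le) (mem_univ n)
    rw [max_eq_left hc1]
    linarith
  · push_neg at hc1
    by_cases hc2 : G Q₂ ≤ H Q₂
    · -- take q = Q₂
      apply main Q₂ hQ le_rfl
      obtain ⟨p, _, hp⟩ := Finset.exists_mem_eq_sup' hneP (fun p => B p * Q₂ ^ (-(v p)))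
      have hle : H Q₂ ≤ ∑ p, B p * Q₂ ^ (-(v p)) := by
        have : H Q₂ = B p * Q₂ ^ (-(v p)) := hp
        rw [this]
        exact Finset.single_le_sum (f := fun p => B p * Q₂ ^ (-(v p)))
          (fun i _ => mul_nonneg (hB i)
            (Real.rpow_pos_of_pos (lt_of_lt_of_le hQ₁ hQ) _).le) (mem_univ p)
      rw [max_eq_right hc2]
      linarith
    · push_neg at hc2
      -- IVT: find q ∈ [Q₁, Q₂] with G q = H q
      have hcont : ContinuousOn (fun q => G q - H q) (Set.Icc Q₁ Q₂) := by
        rw [hG, hH]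
        apply ContinuousOn.sub
        · apply ContinuousOn.finset_sup'_apply hneN
            (f := fun n q => A n * q ^ u n)
          intro n _
          apply ContinuousOn.mul continuousOn_const
          intro x hx
          have hx0 : x ≠ 0 := by have := hx.1; intro h; rw [h] at this; linarith
          exact (Real.continuousAt_rpow_const x _ (Or.inl hx0)).continuousWithinAt
        · apply ContinuousOn.finset_sup'_apply hneP
            (f := fun p q => B p * q ^ (-(v p)))
          intro p _
          apply ContinuousOn.mul continuousOn_const
          intro x hx
          have hx0 : x ≠ 0 := by have := hx.1; intro h; rw [h] at this; linarith
          exact (Real.continuousAt_rpow_const x _ (Or.inl hx0)).continuousWithinAt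
      have hmem : (0:ℝ) ∈ Set.Icc (G Q₁ - H Q₁) (G Q₂ - H Q₂) :=
        ⟨by linarith, by linarith⟩
      obtain ⟨q, hqmem, hq0⟩ := intermediate_value_Icc hQ hcont hmem
      have hqpos : 0 < q := lt_of_lt_of_le hQ₁ hqmem.1
      apply main q hqmem.1 hqmem.2
      have heqGH : G q = H q := sub_eq_zero.mp hq0
      obtain ⟨n, _, hn⟩ := Finset.exists_mem_eq_sup' hneN (fun n => A n * q ^ u n)
      obtain ⟨p, _, hp⟩ := Finset.exists_mem_eq_sup' hneP (fun p => B p * q ^ (-(v p)))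
      have hGq : G q = A n * q ^ u n := hn
      have hHq : H q = B p * q ^ (-(v p)) := hp
      have heq : A n * q ^ u n = B p * q ^ (-(v p)) := by
        rw [← hGq, ← hHq]; exact heqGH
      have hval : A n * q ^ u n = (A n ^ v p * B p ^ u n) ^ (1 / (u n + v p)) :=
        cross_value (A n) (B p) (u n) (v p) q (hA n) (hB p) (hu n) (hv p) hqpos heq
      have hle : (A n ^ v p * B p ^ u n) ^ (1 / (u n + v p)) ≤
          ∑ n, ∑ p, (A n ^ v p * B p ^ u n) ^ (1 / (u n + v p)) := by
        calc (A n ^ v p * B p ^ u n) ^ (1 / (u n + v p))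
            ≤ ∑ p, (A n ^ v p * B p ^ u n) ^ (1 / (u n + v p)) :=
              Finset.single_le_sum (f := fun p =>
                (A n ^ v p * B p ^ u n) ^ (1 / (u n + v p)))
                (fun i _ => Real.rpow_nonneg (mul_nonneg (Real.rpow_nonneg (hA n) _)
                  (Real.rpow_nonneg (hB i) _)) _) (mem_univ p)
          _ ≤ ∑ n, ∑ p, (A n ^ v p * B p ^ u n) ^ (1 / (u n + v p)) :=
              Finset.single_le_sum (f := fun n => ∑ p,
                (A n ^ v p * B p ^ u n) ^ (1 / (u n + v p)))
                (fun i _ => Finset.sum_nonneg fun j _ => Real.rpow_nonneg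
                  (mul_nonneg (Real.rpow_nonneg (hA i) _)
                    (Real.rpow_nonneg (hB j) _)) _) (mem_univ n)
      have hmx : max (G q) (H q) = A n * q ^ u n := by rw [max_eq_left heqGH.ge, hGq]
      rw [hmx, hval]
      linarith
end
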